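/- arXiv:1806.07939 — 2 statements merged into one kernel-verified Lean document; each statement's English description precedes it below -/
import Mathlib

section
/- Under the conformal change ā_{ij} = e^{2σ}a_{ij}, b̄_i = e^{σ}b_i (so that ᾱ = e^{σ}α, β̄ = e^{σ}β, and L̄ := L(ᾱ,β̄) = e^{σ}L(α,β) by 1-homogeneity of L), the quantity C* transforms as C̄* = e^{σ}(C* + D*), where D* = αβ[(ρα² − σ₀β)L_α − α(b²σ₀ − ρβ)L_β] / (2(β²L_α + αγ²L_{αα})). -/
noncomputable section

namespace CD

/-- Partial derivative of `f` in the `j`-th coordinate direction at `x`. -/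
def pd {n : ℕ} (f : (Fin n → ℝ) → ℝ) (j : Fin n) (x : Fin n → ℝ) : ℝ :=
  fderiv ℝ f x (Pi.single j 1)

/-- Christoffel symbols `γ^i_{jk} = ½ a^{ir}(∂_j a_{rk} + ∂_k a_{rj} − ∂_r a_{jk})`
of the Riemannian metric `a`, where `ainv` denotes the inverse matrix field `a^{ij}`. -/
def chr {n : ℕ} (a ainv : (Fin n → ℝ) → Matrix (Fin n) (Fin n) ℝ)
    (x : Fin n → ℝ) (i j k : Fin n) : ℝ :=
  (1 / 2) * ∑ r, ainv x i r *
    (pd (fun z => a z r k) j x + pd (fun z => a z r j) k x - pd (fun z => a z j k) r x)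

/-- Covariant derivative `b_{i:j} = ∂_j b_i − b_r γ^r_{ij}`. -/
def covd {n : ℕ} (a ainv : (Fin n → ℝ) → Matrix (Fin n) (Fin n) ℝ)
    (b : (Fin n → ℝ) → Fin n → ℝ) (x : Fin n → ℝ) (i j : Fin n) : ℝ :=
  pd (fun z => b z i) j x - ∑ r, b x r * chr a ainv x r i j

/-- `r_{ij}` with `2r_{ij} = b_{i:j} + b_{j:i}`. -/
def rlow {n : ℕ} (a ainv : (Fin n → ℝ) → Matrix (Fin n) (Fin n) ℝ)
    (b : (Fin n → ℝ) → Fin n → ℝ) (x : Fin n → ℝ) (i j : Fin n) : ℝ :=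
  (covd a ainv b x i j + covd a ainv b x j i) / 2

/-- `s_{ij}` with `2s_{ij} = b_{i:j} − b_{j:i}`. -/
def slow {n : ℕ} (a ainv : (Fin n → ℝ) → Matrix (Fin n) (Fin n) ℝ)
    (b : (Fin n → ℝ) → Fin n → ℝ) (x : Fin n → ℝ) (i j : Fin n) : ℝ :=
  (covd a ainv b x i j - covd a ainv b x j i) / 2

/-- `b^i = a^{ir} b_r`. -/
def bup {n : ℕ} (ainv : (Fin n → ℝ) → Matrix (Fin n) (Fin n) ℝ)
    (b : (Fin n → ℝ) → Fin n → ℝ) (x : Fin n → ℝ) (i : Fin n) : ℝ :=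
  ∑ r, ainv x i r * b x r

/-- `b² = a^{rs} b_r b_s`. -/
def bsq {n : ℕ} (ainv : (Fin n → ℝ) → Matrix (Fin n) (Fin n) ℝ)
    (b : (Fin n → ℝ) → Fin n → ℝ) (x : Fin n → ℝ) : ℝ :=
  ∑ r, ∑ s, ainv x r s * b x r * b x s

/-- `s^i_j = a^{ir} s_{rj}`. -/
def sup {n : ℕ} (a ainv : (Fin n → ℝ) → Matrix (Fin n) (Fin n) ℝ)
    (b : (Fin n → ℝ) → Fin n → ℝ) (x : Fin n → ℝ) (i j : Fin n) : ℝ :=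
  ∑ r, ainv x i r * slow a ainv b x r j

/-- `s_j = b_r s^r_j`. -/
def svec {n : ℕ} (a ainv : (Fin n → ℝ) → Matrix (Fin n) (Fin n) ℝ)
    (b : (Fin n → ℝ) → Fin n → ℝ) (x : Fin n → ℝ) (j : Fin n) : ℝ :=
  ∑ r, b x r * sup a ainv b x r j

/-- `r_i = b^r r_{ri}`. -/
def rvec {n : ℕ} (a ainv : (Fin n → ℝ) → Matrix (Fin n) (Fin n) ℝ)
    (b : (Fin n → ℝ) → Fin n → ℝ) (x : Fin n → ℝ) (i : Fin n) : ℝ :=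
  ∑ r, bup ainv b x r * rlow a ainv b x r i

/-- `α(x,y) = √(a_{ij}(x) y^i y^j)`. -/
def alpha {n : ℕ} (a : (Fin n → ℝ) → Matrix (Fin n) (Fin n) ℝ)
    (x y : Fin n → ℝ) : ℝ :=
  Real.sqrt (∑ i, ∑ j, a x i j * y i * y j)

/-- `β(x,y) = b_i(x) y^i`. -/
def beta {n : ℕ} (b : (Fin n → ℝ) → Fin n → ℝ) (x y : Fin n → ℝ) : ℝ :=
  ∑ i, b x i * y i

/-- `γ^i_{00} = γ^i_{jk} y^j y^k`. -/
def gam00 {n : ℕ} (a ainv : (Fin n → ℝ) → Matrix (Fin n) (Fin n) ℝ)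
    (x y : Fin n → ℝ) (i : Fin n) : ℝ :=
  ∑ j, ∑ k, chr a ainv x i j k * y j * y k

/-- `γ^m_{0m} = γ^m_{jm} y^j`. -/
def gamTr {n : ℕ} (a ainv : (Fin n → ℝ) → Matrix (Fin n) (Fin n) ℝ)
    (x y : Fin n → ℝ) : ℝ :=
  ∑ m, ∑ j, chr a ainv x m j m * y j

/-- `r_{00} = r_{ij} y^i y^j`. -/
def r00 {n : ℕ} (a ainv : (Fin n → ℝ) → Matrix (Fin n) (Fin n) ℝ)
    (b : (Fin n → ℝ) → Fin n → ℝ) (x y : Fin n → ℝ) : ℝ :=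
  ∑ i, ∑ j, rlow a ainv b x i j * y i * y j

/-- `s^i_0 = s^i_j y^j`. -/
def sup0 {n : ℕ} (a ainv : (Fin n → ℝ) → Matrix (Fin n) (Fin n) ℝ)
    (b : (Fin n → ℝ) → Fin n → ℝ) (x y : Fin n → ℝ) (i : Fin n) : ℝ :=
  ∑ j, sup a ainv b x i j * y j

/-- `s_0 = s_j y^j`. -/
def s0 {n : ℕ} (a ainv : (Fin n → ℝ) → Matrix (Fin n) (Fin n) ℝ)
    (b : (Fin n → ℝ) → Fin n → ℝ) (x y : Fin n → ℝ) : ℝ :=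
  ∑ j, svec a ainv b x j * y j

/-- `r_0 = r_i y^i`. -/
def r0 {n : ℕ} (a ainv : (Fin n → ℝ) → Matrix (Fin n) (Fin n) ℝ)
    (b : (Fin n → ℝ) → Fin n → ℝ) (x y : Fin n → ℝ) : ℝ :=
  ∑ i, rvec a ainv b x i * y i

/-- `σ₀ = σ_i y^i` where `σ_i = ∂_i σ`. -/
def sig0 {n : ℕ} (σ : (Fin n → ℝ) → ℝ) (x y : Fin n → ℝ) : ℝ :=
  ∑ j, pd σ j x * y j

/-- `σ^i = a^{ir} σ_r`. -/
def sigup {n : ℕ} (ainv : (Fin n → ℝ) → Matrix (Fin n) (Fin n) ℝ)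
    (σ : (Fin n → ℝ) → ℝ) (x : Fin n → ℝ) (i : Fin n) : ℝ :=
  ∑ r, ainv x i r * pd σ r x

/-- `ρ = σ_r b^r`. -/
def rho {n : ℕ} (ainv : (Fin n → ℝ) → Matrix (Fin n) (Fin n) ℝ)
    (b : (Fin n → ℝ) → Fin n → ℝ) (σ : (Fin n → ℝ) → ℝ) (x : Fin n → ℝ) : ℝ :=
  ∑ r, pd σ r x * bup ainv b x r

/-- `L_α`. -/
def La (L : ℝ → ℝ → ℝ) (s t : ℝ) : ℝ := deriv (fun u => L u t) s
/-- `L_β`. -/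
def Lb (L : ℝ → ℝ → ℝ) (s t : ℝ) : ℝ := deriv (fun u => L s u) t
/-- `L_{αα}`. -/
def Laa (L : ℝ → ℝ → ℝ) (s t : ℝ) : ℝ := deriv (fun u => La L u t) s
/-- `L_{ααα}`. -/
def Laaa (L : ℝ → ℝ → ℝ) (s t : ℝ) : ℝ := deriv (fun u => Laa L u t) s

/-- `γ² = b²α² − β²`, as a function of `b², α, β`. -/
def gam2 (b2 s t : ℝ) : ℝ := b2 * s ^ 2 - t ^ 2

/-- `Ω = β²L_α + αγ²L_{αα}`. -/
def Om (L : ℝ → ℝ → ℝ) (b2 s t : ℝ) : ℝ :=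
  t ^ 2 * La L s t + s * gam2 b2 s t * Laa L s t

/-- `A = αL_αL_{ααα} + 3L_αL_{αα} − 3α(L_{αα})²`. -/
def Afun (L : ℝ → ℝ → ℝ) (s t : ℝ) : ℝ :=
  s * La L s t * Laaa L s t + 3 * La L s t * Laa L s t - 3 * s * (Laa L s t) ^ 2

/-- `B = αβγ²L_αL_βL_{ααα} + β{(3γ² − β²)L_α − 4αγ²L_{αα}}L_βL_{αα} + ΩLL_{αα}`. -/
def Bcal (L : ℝ → ℝ → ℝ) (b2 s t : ℝ) : ℝ :=
  s * t * gam2 b2 s t * La L s t * Lb L s t * Laaa L s t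
    + t * ((3 * gam2 b2 s t - t ^ 2) * La L s t - 4 * s * gam2 b2 s t * Laa L s t)
        * Lb L s t * Laa L s t
    + Om L b2 s t * L s t * Laa L s t

/-- `C* = αβ(r₀₀L_α − 2αs₀L_β)/(2Ω)`. -/
def Cstar {n : ℕ} (L : ℝ → ℝ → ℝ) (a ainv : (Fin n → ℝ) → Matrix (Fin n) (Fin n) ℝ)
    (b : (Fin n → ℝ) → Fin n → ℝ) (x y : Fin n → ℝ) : ℝ :=
  let s := alpha a x y
  let t := beta b x y
  s * t * (r00 a ainv b x y * La L s t - 2 * s * s0 a ainv b x y * Lb L s t)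
    / (2 * Om L (bsq ainv b x) s t)

/-- `D* = αβ[(ρα² − σ₀β)L_α − α(b²σ₀ − ρβ)L_β]/(2Ω)`. -/
def Dstar {n : ℕ} (L : ℝ → ℝ → ℝ) (a ainv : (Fin n → ℝ) → Matrix (Fin n) (Fin n) ℝ)
    (b : (Fin n → ℝ) → Fin n → ℝ) (σ : (Fin n → ℝ) → ℝ) (x y : Fin n → ℝ) : ℝ :=
  let s := alpha a x y
  let t := beta b x y
  s * t * ((rho ainv b σ x * s ^ 2 - sig0 σ x y * t) * La L s t
      - s * (bsq ainv b x * sig0 σ x y - rho ainv b σ x * t) * Lb L s t)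
    / (2 * Om L (bsq ainv b x) s t)

/-- The spray difference vector
`B^i = (αL_β/L_α)s^i_0 + C*[(βL_β/(αL))y^i − (αL_{αα}/L_α)(y^i/α − αb^i/β)]`. -/
def Bi {n : ℕ} (L : ℝ → ℝ → ℝ) (a ainv : (Fin n → ℝ) → Matrix (Fin n) (Fin n) ℝ)
    (b : (Fin n → ℝ) → Fin n → ℝ) (x y : Fin n → ℝ) (i : Fin n) : ℝ :=
  let s := alpha a x y
  let t := beta b x y
  (s * Lb L s t / La L s t) * sup0 a ainv b x y i
    + Cstar L a ainv b x y *
        ((t * Lb L s t / (s * L s t)) * y i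
          - (s * Laa L s t / La L s t) * (y i / s - s * bup ainv b x i / t))

/-- `B^m_m = ∂B^m/∂y^m`. -/
def Bmm {n : ℕ} (L : ℝ → ℝ → ℝ) (a ainv : (Fin n → ℝ) → Matrix (Fin n) (Fin n) ℝ)
    (b : (Fin n → ℝ) → Fin n → ℝ) (x y : Fin n → ℝ) : ℝ :=
  ∑ m, fderiv ℝ (fun y' => Bi L a ainv b x y' m) y (Pi.single m 1)

/-- `B^{ij} = (αL_β/L_α)(s^i_0y^j − s^j_0y^i) + (α²L_{αα}/(βL_α))C*(b^iy^j − b^jy^i)`. -/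
def BijC {n : ℕ} (L : ℝ → ℝ → ℝ) (a ainv : (Fin n → ℝ) → Matrix (Fin n) (Fin n) ℝ)
    (b : (Fin n → ℝ) → Fin n → ℝ) (x y : Fin n → ℝ) (i j : Fin n) : ℝ :=
  let s := alpha a x y
  let t := beta b x y
  (s * Lb L s t / La L s t) * (sup0 a ainv b x y i * y j - sup0 a ainv b x y j * y i)
    + (s ^ 2 * Laa L s t / (t * La L s t)) * Cstar L a ainv b x y
        * (bup ainv b x i * y j - bup ainv b x j * y i)

/-- The closed formula for `B^{im}_m`. -/
def BimmC {n : ℕ} (L : ℝ → ℝ → ℝ) (a ainv : (Fin n → ℝ) → Matrix (Fin n) (Fin n) ℝ)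
    (b : (Fin n → ℝ) → Fin n → ℝ) (x y : Fin n → ℝ) (i : Fin n) : ℝ :=
  let s := alpha a x y
  let t := beta b x y
  let b2 := bsq ainv b x
  let O := Om L b2 s t
  (n + 1 : ℝ) * s * Lb L s t * sup0 a ainv b x y i / La L s t
    + s * ((n + 1 : ℝ) * s ^ 2 * O * Laa L s t * bup ainv b x i
        + t * gam2 b2 s t * Afun L s t * y i) * r00 a ainv b x y / (2 * O ^ 2)
    - s ^ 2 * ((n + 1 : ℝ) * s ^ 2 * O * Lb L s t * Laa L s t * bup ainv b x i
        + Bcal L b2 s t * y i) * s0 a ainv b x y / (La L s t * O ^ 2)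
    - s ^ 3 * Laa L s t * y i * r0 a ainv b x y / O

/-- The conformal correction `K^{im}_m`, given by
`2K^{im}_m = (n+1)(αL_β/L_α)(σ₀b^i − βσ^i)
  + α{((n+1)α²ΩL_{αα}b^i + βγ²Ay^i)/Ω²}(ρα² − σ₀β)
  − [α²{(n+1)α²ΩL_βL_{αα}b^i + By^i}/(L_αΩ²) − α³L_{αα}y^i/Ω](b²σ₀ − ρβ)`. -/
def Kimm {n : ℕ} (L : ℝ → ℝ → ℝ) (a ainv : (Fin n → ℝ) → Matrix (Fin n) (Fin n) ℝ)
    (b : (Fin n → ℝ) → Fin n → ℝ) (σ : (Fin n → ℝ) → ℝ) (x y : Fin n → ℝ) (i : Fin n) : ℝ :=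
  let s := alpha a x y
  let t := beta b x y
  let b2 := bsq ainv b x
  let O := Om L b2 s t
  let σ0 := sig0 σ x y
  let ρ := rho ainv b σ x
  (1 / 2) *
    ((n + 1 : ℝ) * (s * Lb L s t / La L s t) * (σ0 * bup ainv b x i - t * sigup ainv σ x i)
      + s * (((n + 1 : ℝ) * s ^ 2 * O * Laa L s t * bup ainv b x i
            + t * gam2 b2 s t * Afun L s t * y i) / O ^ 2) * (ρ * s ^ 2 - σ0 * t)
      - (s ^ 2 * ((n + 1 : ℝ) * s ^ 2 * O * Lb L s t * Laa L s t * bup ainv b x i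
            + Bcal L b2 s t * y i) / (La L s t * O ^ 2)
          - s ^ 3 * Laa L s t * y i / O) * (b2 * σ0 - ρ * t))

/-- `E` is hp(d): it agrees with a homogeneous polynomial of degree `d` in `y`. -/
def IsHP {n : ℕ} (d : ℕ) (E : (Fin n → ℝ) → ℝ) : Prop :=
  ∃ p : MvPolynomial (Fin n) ℝ, p.IsHomogeneous d ∧ ∀ y, E y = MvPolynomial.eval y p

/-- The conformally changed metric `ā_{ij} = e^{2σ} a_{ij}`. -/
def abar {n : ℕ} (σ : (Fin n → ℝ) → ℝ) (a : (Fin n → ℝ) → Matrix (Fin n) (Fin n) ℝ) :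
    (Fin n → ℝ) → Matrix (Fin n) (Fin n) ℝ :=
  fun z => Real.exp (2 * σ z) • a z

/-- The conformally changed covector `b̄_i = e^{σ} b_i`. -/
def bbar {n : ℕ} (σ : (Fin n → ℝ) → ℝ) (b : (Fin n → ℝ) → Fin n → ℝ) :
    (Fin n → ℝ) → Fin n → ℝ :=
  fun z i => Real.exp (σ z) * b z i

/-- The special (α,β)-metric `L = α + εβ + kβ²/α`. -/
def Lsp (ε k : ℝ) : ℝ → ℝ → ℝ := fun s t => s + ε * t + k * t ^ 2 / s


/-! ### Auxiliary lemmas -/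

lemma sum_mul_sum' {n : ℕ} (f g : Fin n → ℝ) :
    (∑ i, f i) * (∑ j, g j) = ∑ i, ∑ j, f i * g j := by
  rw [Finset.sum_mul_sum]

lemma pd_mul {n : ℕ} {f g : (Fin n → ℝ) → ℝ} {x : Fin n → ℝ} (j : Fin n)
    (hf : DifferentiableAt ℝ f x) (hg : DifferentiableAt ℝ g x) :
    pd (fun z => f z * g z) j x = pd f j x * g x + f x * pd g j x := by
  unfold pd
  rw [fderiv_fun_mul hf hg]
  simp only [ContinuousLinearMap.add_apply, ContinuousLinearMap.smul_apply, smul_eq_mul]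
  ring

lemma pd_exp_comp {n : ℕ} {σ : (Fin n → ℝ) → ℝ} {x : Fin n → ℝ} (c : ℝ) (j : Fin n)
    (hσ : DifferentiableAt ℝ σ x) :
    pd (fun z => Real.exp (c * σ z)) j x = Real.exp (c * σ x) * (c * pd σ j x) := by
  have h2 : HasFDerivAt (fun z => c * σ z) (c • fderiv ℝ σ x) x := hσ.hasFDerivAt.const_mul c
  have h3 : HasFDerivAt (fun z => Real.exp (c * σ z))
      (Real.exp (c * σ x) • c • fderiv ℝ σ x) x := by
    have := (Real.hasDerivAt_exp (c * σ x)).comp_hasFDerivAt x h2; exact this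
  unfold pd
  rw [h3.fderiv]
  simp

lemma pd_exp1 {n : ℕ} {σ : (Fin n → ℝ) → ℝ} {x : Fin n → ℝ} (j : Fin n)
    (hσ : DifferentiableAt ℝ σ x) :
    pd (fun z => Real.exp (σ z)) j x = Real.exp (σ x) * pd σ j x := by
  have h3 : HasFDerivAt (fun z => Real.exp (σ z)) (Real.exp (σ x) • fderiv ℝ σ x) x :=
    (Real.hasDerivAt_exp (σ x)).comp_hasFDerivAt x hσ.hasFDerivAt
  unfold pd
  rw [h3.fderiv]
  simp

lemma diff_fst (L : ℝ → ℝ → ℝ) (hL : ContDiff ℝ (⊤ : ℕ∞) (fun p : ℝ × ℝ => L p.1 p.2)) (t : ℝ) :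
    Differentiable ℝ (fun u => L u t) :=
  (hL.comp (contDiff_id.prodMk contDiff_const)).differentiable (by simp)

lemma diff_snd (L : ℝ → ℝ → ℝ) (hL : ContDiff ℝ (⊤ : ℕ∞) (fun p : ℝ × ℝ => L p.1 p.2)) (s : ℝ) :
    Differentiable ℝ (fun u => L s u) :=
  (hL.comp (contDiff_const.prodMk contDiff_id)).differentiable (by simp)

lemma diff_La (L : ℝ → ℝ → ℝ) (hL : ContDiff ℝ (⊤ : ℕ∞) (fun p : ℝ × ℝ => L p.1 p.2)) (t : ℝ) :
    Differentiable ℝ (fun v => La L v t) := by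
  have h : ContDiff ℝ ((⊤:ℕ∞):WithTop ℕ∞) (fun u : ℝ => L u t) :=
    (hL.comp (contDiff_id.prodMk contDiff_const)).of_le (by simp)
  have := (contDiff_infty_iff_deriv.mp h).2.differentiable (by simp)
  simpa only [La] using this

lemma La_hom (L : ℝ → ℝ → ℝ) (hL : ContDiff ℝ (⊤ : ℕ∞) (fun p : ℝ × ℝ => L p.1 p.2))
    (hLhom : ∀ c > 0, ∀ s t : ℝ, L (c * s) (c * t) = c * L s t)
    {c : ℝ} (hc : 0 < c) (s t : ℝ) : La L (c * s) (c * t) = La L s t := by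
  have h1 : HasDerivAt (fun u => L u (c * t)) (La L (c * s) (c * t)) (c * s) :=
    (diff_fst L hL (c * t) (c * s)).hasDerivAt
  have h2 : HasDerivAt (fun u : ℝ => c * u) c s := by
    simpa using (hasDerivAt_id s).const_mul c
  have h3 : HasDerivAt (fun u => L (c * u) (c * t)) (La L (c * s) (c * t) * c) s :=
    h1.comp s h2
  have h5 : (fun u : ℝ => L (c * u) (c * t)) = fun u => c * L u t :=
    funext fun u => hLhom c hc u t
  rw [h5] at h3
  have h4 : HasDerivAt (fun u => c * L u t) (c * La L s t) s :=
    (diff_fst L hL t s).hasDerivAt.const_mul c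
  have h6 := h3.unique h4
  have hcne : c ≠ 0 := ne_of_gt hc
  apply mul_right_cancel₀ hcne
  linear_combination h6

lemma Lb_hom (L : ℝ → ℝ → ℝ) (hL : ContDiff ℝ (⊤ : ℕ∞) (fun p : ℝ × ℝ => L p.1 p.2))
    (hLhom : ∀ c > 0, ∀ s t : ℝ, L (c * s) (c * t) = c * L s t)
    {c : ℝ} (hc : 0 < c) (s t : ℝ) : Lb L (c * s) (c * t) = Lb L s t := by
  have h1 : HasDerivAt (fun u => L (c * s) u) (Lb L (c * s) (c * t)) (c * t) :=
    (diff_snd L hL (c * s) (c * t)).hasDerivAt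
  have h2 : HasDerivAt (fun u : ℝ => c * u) c t := by
    simpa using (hasDerivAt_id t).const_mul c
  have h3 : HasDerivAt (fun u => L (c * s) (c * u)) (Lb L (c * s) (c * t) * c) t :=
    h1.comp t h2
  have h5 : (fun u : ℝ => L (c * s) (c * u)) = fun u => c * L s u :=
    funext fun u => hLhom c hc s u
  rw [h5] at h3
  have h4 : HasDerivAt (fun u => c * L s u) (c * Lb L s t) t :=
    (diff_snd L hL s t).hasDerivAt.const_mul c
  have h6 := h3.unique h4
  have hcne : c ≠ 0 := ne_of_gt hc
  apply mul_right_cancel₀ hcne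
  linear_combination h6

lemma Laa_hom (L : ℝ → ℝ → ℝ) (hL : ContDiff ℝ (⊤ : ℕ∞) (fun p : ℝ × ℝ => L p.1 p.2))
    (hLhom : ∀ c > 0, ∀ s t : ℝ, L (c * s) (c * t) = c * L s t)
    {c : ℝ} (hc : 0 < c) (s t : ℝ) : c * Laa L (c * s) (c * t) = Laa L s t := by
  have h1 : HasDerivAt (fun v => La L v (c * t)) (Laa L (c * s) (c * t)) (c * s) :=
    (diff_La L hL (c * t) (c * s)).hasDerivAt
  have h2 : HasDerivAt (fun u : ℝ => c * u) c s := by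
    simpa using (hasDerivAt_id s).const_mul c
  have h3 : HasDerivAt (fun u => La L (c * u) (c * t)) (Laa L (c * s) (c * t) * c) s :=
    h1.comp s h2
  have h5 : (fun u : ℝ => La L (c * u) (c * t)) = fun u => La L u t :=
    funext fun u => La_hom L hL hLhom hc u t
  rw [h5] at h3
  have h4 : HasDerivAt (fun u => La L u t) (Laa L s t) s :=
    (diff_La L hL t s).hasDerivAt
  have h6 := h3.unique h4
  linarith [h6]


/-- conformal change of C*: C̄* = e^σ(C* + D*). -/
theorem conformal_change_Cstar
    {n : ℕ} (hn : 2 ≤ n) (M : Set (Fin n → ℝ)) (hM : IsOpen M)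
    (a ainv abarInv : (Fin n → ℝ) → Matrix (Fin n) (Fin n) ℝ)
    (b : (Fin n → ℝ) → Fin n → ℝ) (σ : (Fin n → ℝ) → ℝ)
    (ha : ∀ i j, ContDiffOn ℝ (⊤ : ℕ∞) (fun z => a z i j) M)
    (hb : ∀ i, ContDiffOn ℝ (⊤ : ℕ∞) (fun z => b z i) M)
    (hσ : ContDiffOn ℝ (⊤ : ℕ∞) σ M)
    (hsym : ∀ x ∈ M, (a x).IsSymm)
    (hpos : ∀ x ∈ M, (a x).PosDef)
    (hInv : ∀ x ∈ M, a x * ainv x = 1)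
    (hInvBar : ∀ x ∈ M, abar σ a x * abarInv x = 1)
    (L : ℝ → ℝ → ℝ) (hL : ContDiff ℝ (⊤ : ℕ∞) (fun p : ℝ × ℝ => L p.1 p.2))
    (hLhom : ∀ c > 0, ∀ s t : ℝ, L (c * s) (c * t) = c * L s t)
    :
    ∀ x ∈ M, ∀ y : Fin n → ℝ,
      Om L (bsq ainv b x) (alpha a x y) (beta b x y) ≠ 0 →
      Cstar L (abar σ a) abarInv (bbar σ b) x y
        = Real.exp (σ x) * (Cstar L a ainv b x y + Dstar L a ainv b σ x y) := by
  intro x hx y hΩ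
  have hxM : M ∈ nhds x := hM.mem_nhds hx
  have hdσ : DifferentiableAt ℝ σ x :=
    (hσ.differentiableOn (by simp)).differentiableAt hxM
  have hda : ∀ i j, DifferentiableAt ℝ (fun z => a z i j) x := fun i j =>
    ((ha i j).differentiableOn (by simp)).differentiableAt hxM
  have hdb : ∀ i, DifferentiableAt ℝ (fun z => b z i) x := fun i =>
    ((hb i).differentiableOn (by simp)).differentiableAt hxM
  have hc : (0:ℝ) < Real.exp (σ x) := Real.exp_pos _
  have hcne : Real.exp (σ x) ≠ 0 := ne_of_gt hc
  have hE2 : Real.exp (2 * σ x) = Real.exp (σ x) * Real.exp (σ x) := by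
    rw [two_mul, Real.exp_add]
  have hE2ne : Real.exp (2 * σ x) ≠ 0 := (Real.exp_pos _).ne'
  -- inverse matrix facts
  have hIa : ainv x * a x = 1 := mul_eq_one_comm.mp (hInv x hx)
  have habarInv : abarInv x = (Real.exp (2 * σ x))⁻¹ • ainv x := by
    have h1 : (abar σ a x)⁻¹ = abarInv x := Matrix.inv_eq_right_inv (hInvBar x hx)
    have h2 : abar σ a x * ((Real.exp (2 * σ x))⁻¹ • ainv x) = 1 := by
      show (Real.exp (2 * σ x) • a x) * ((Real.exp (2 * σ x))⁻¹ • ainv x) = 1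
      rw [Matrix.smul_mul, Matrix.mul_smul, smul_smul, hInv x hx,
        mul_inv_cancel₀ hE2ne, one_smul]
    rw [← h1, Matrix.inv_eq_right_inv h2]
  have habarInv' : ∀ i j, abarInv x i j = (Real.exp (2 * σ x))⁻¹ * ainv x i j := by
    intro i j; rw [habarInv]; simp
  have hδ : ∀ i k, (∑ r, ainv x i r * a x r k) = (1 : Matrix (Fin n) (Fin n) ℝ) i k := by
    intro i k; rw [← Matrix.mul_apply, hIa]
  have hsyma : ∀ i j, a x i j = a x j i := by
    intro i j
    conv_rhs => rw [← (hsym x hx).eq]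
    rw [Matrix.transpose_apply]
  have hsymainv : ∀ i j, ainv x i j = ainv x j i := by
    have hT : (ainv x).transpose = ainv x := by
      rw [← Matrix.inv_eq_right_inv (hInv x hx), Matrix.transpose_nonsing_inv, (hsym x hx).eq]
    intro i j
    conv_rhs => rw [← hT]
    rw [Matrix.transpose_apply]
  have hone : ∀ (f : Fin n → ℝ) (j : Fin n),
      (∑ r, f r * (1 : Matrix (Fin n) (Fin n) ℝ) r j) = f j := by
    intro f j
    simp [Matrix.one_apply]
  have hbb : (∑ r, b x r * bup ainv b x r) = bsq ainv b x := by
    unfold bup bsq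
    simp only [Finset.mul_sum]
    exact Finset.sum_congr rfl fun r _ => Finset.sum_congr rfl fun s _ => by ring
  have hbsig : (∑ r, b x r * sigup ainv σ x r) = rho ainv b σ x := by
    unfold sigup rho bup
    simp only [Finset.mul_sum]
    rw [Finset.sum_comm]
    refine Finset.sum_congr rfl fun l _ => Finset.sum_congr rfl fun r _ => ?_
    rw [hsymainv r l]; ring
  -- derivatives of barred data
  have h_pd_abar : ∀ i j k, pd (fun z => abar σ a z i j) k x
      = Real.exp (2 * σ x) * (2 * pd σ k x * a x i j + pd (fun z => a z i j) k x) := by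
    intro i j k
    have he : (fun z => abar σ a z i j) = fun z => Real.exp (2 * σ z) * a z i j := by
      funext z; simp [abar]
    rw [he, pd_mul k ((hdσ.const_mul 2).exp) (hda i j), pd_exp_comp 2 k hdσ]
    ring
  have h_pd_bbar : ∀ i j, pd (fun z => bbar σ b z i) j x
      = Real.exp (σ x) * (pd σ j x * b x i + pd (fun z => b z i) j x) := by
    intro i j
    have he : (fun z => bbar σ b z i) = fun z => Real.exp (σ z) * b z i := rfl
    rw [he, pd_mul j hdσ.exp (hdb i), pd_exp1 j hdσ]
    ring
  -- Christoffel symbols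
  have hchr : ∀ i j k, chr (abar σ a) abarInv x i j k
      = chr a ainv x i j k + pd σ j x * (1 : Matrix (Fin n) (Fin n) ℝ) i k
        + pd σ k x * (1 : Matrix (Fin n) (Fin n) ℝ) i j - a x j k * sigup ainv σ x i := by
    intro i j k
    have step : ∀ r, abarInv x i r *
        (pd (fun z => abar σ a z r k) j x + pd (fun z => abar σ a z r j) k x
          - pd (fun z => abar σ a z j k) r x)
        = ainv x i r * (pd (fun z => a z r k) j x + pd (fun z => a z r j) k x
            - pd (fun z => a z j k) r x)
          + (2 * pd σ j x) * (ainv x i r * a x r k)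
          + (2 * pd σ k x) * (ainv x i r * a x r j)
          - (2 * a x j k) * (ainv x i r * pd σ r x) := by
      intro r
      rw [habarInv' i r, h_pd_abar r k j, h_pd_abar r j k, h_pd_abar j k r]
      field_simp
      ring
    unfold chr
    rw [Finset.sum_congr rfl fun r _ => step r, Finset.sum_sub_distrib,
        Finset.sum_add_distrib, Finset.sum_add_distrib]
    have g2 : (∑ r, (2 * pd σ j x) * (ainv x i r * a x r k))
        = (2 * pd σ j x) * (1 : Matrix (Fin n) (Fin n) ℝ) i k := by
      rw [← Finset.mul_sum, hδ i k]
    have g3 : (∑ r, (2 * pd σ k x) * (ainv x i r * a x r j))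
        = (2 * pd σ k x) * (1 : Matrix (Fin n) (Fin n) ℝ) i j := by
      rw [← Finset.mul_sum, hδ i j]
    have g4 : (∑ r, (2 * a x j k) * (ainv x i r * pd σ r x))
        = (2 * a x j k) * sigup ainv σ x i := by
      unfold sigup; rw [← Finset.mul_sum]
    rw [g2, g3, g4]
    ring
  -- covariant derivative
  have hcovd : ∀ i j, covd (abar σ a) abarInv (bbar σ b) x i j
      = Real.exp (σ x) * (covd a ainv b x i j - b x j * pd σ i x
          + a x i j * rho ainv b σ x) := by
    intro i j
    unfold covd
    rw [h_pd_bbar i j]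
    have step : ∀ r, bbar σ b x r * chr (abar σ a) abarInv x r i j
        = Real.exp (σ x) * (b x r * chr a ainv x r i j)
          + (Real.exp (σ x) * pd σ i x) * (b x r * (1:Matrix (Fin n) (Fin n) ℝ) r j)
          + (Real.exp (σ x) * pd σ j x) * (b x r * (1:Matrix (Fin n) (Fin n) ℝ) r i)
          - (Real.exp (σ x) * a x i j) * (b x r * sigup ainv σ x r) := by
      intro r
      rw [hchr r i j]
      simp only [bbar]
      ring
    rw [Finset.sum_congr rfl fun r _ => step r, Finset.sum_sub_distrib,
        Finset.sum_add_distrib, Finset.sum_add_distrib]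
    have g1 : (∑ r, Real.exp (σ x) * (b x r * chr a ainv x r i j))
        = Real.exp (σ x) * ∑ r, b x r * chr a ainv x r i j := by rw [← Finset.mul_sum]
    have g2 : (∑ r, (Real.exp (σ x) * pd σ i x) * (b x r * (1:Matrix (Fin n) (Fin n) ℝ) r j))
        = (Real.exp (σ x) * pd σ i x) * b x j := by rw [← Finset.mul_sum, hone (b x) j]
    have g3 : (∑ r, (Real.exp (σ x) * pd σ j x) * (b x r * (1:Matrix (Fin n) (Fin n) ℝ) r i))
        = (Real.exp (σ x) * pd σ j x) * b x i := by rw [← Finset.mul_sum, hone (b x) i]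
    have g4 : (∑ r, (Real.exp (σ x) * a x i j) * (b x r * sigup ainv σ x r))
        = (Real.exp (σ x) * a x i j) * rho ainv b σ x := by rw [← Finset.mul_sum, hbsig]
    rw [g1, g2, g3, g4]
    ring
  have hrlow : ∀ i j, rlow (abar σ a) abarInv (bbar σ b) x i j
      = Real.exp (σ x) * (rlow a ainv b x i j
          - (b x j * pd σ i x + b x i * pd σ j x)/2 + a x i j * rho ainv b σ x) := by
    intro i j
    unfold rlow
    rw [hcovd i j, hcovd j i, hsyma j i]
    ring
  have hslow : ∀ i j, slow (abar σ a) abarInv (bbar σ b) x i j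
      = Real.exp (σ x) * (slow a ainv b x i j
          + (b x i * pd σ j x - b x j * pd σ i x)/2) := by
    intro i j
    unfold slow
    rw [hcovd i j, hcovd j i, hsyma j i]
    ring
  -- quadratic form nonneg and alpha squared
  have hq : (0:ℝ) ≤ ∑ i, ∑ j, a x i j * y i * y j := by
    rcases eq_or_ne y 0 with rfl | hy
    · simp
    · have hp := (hpos x hx).dotProduct_mulVec_pos hy
      have he : dotProduct (star y) ((a x).mulVec y)
          = ∑ i, ∑ j, a x i j * y i * y j := by
        simp only [star_trivial, dotProduct, Matrix.mulVec, Finset.mul_sum]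
        exact Finset.sum_congr rfl fun i _ => Finset.sum_congr rfl fun j _ => by ring
      rw [← he]
      exact le_of_lt hp
  have hS : alpha a x y ^ 2 = ∑ i, ∑ j, a x i j * y i * y j := Real.sq_sqrt hq
  -- r00 under conformal change
  have hr00 : r00 (abar σ a) abarInv (bbar σ b) x y
      = Real.exp (σ x) * (r00 a ainv b x y - sig0 σ x y * beta b x y
          + rho ainv b σ x * alpha a x y ^ 2) := by
    have key : (∑ i, ∑ j, rlow (abar σ a) abarInv (bbar σ b) x i j * y i * y j)
        = Real.exp (σ x) * (∑ i, ∑ j, rlow a ainv b x i j * y i * y j)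
          - (Real.exp (σ x)/2) * (∑ i, ∑ j, (pd σ i x * y i) * (b x j * y j))
          - (Real.exp (σ x)/2) * (∑ i, ∑ j, (b x i * y i) * (pd σ j x * y j))
          + (Real.exp (σ x) * rho ainv b σ x) * (∑ i, ∑ j, a x i j * y i * y j) := by
      simp only [Finset.mul_sum]
      rw [← Finset.sum_sub_distrib, ← Finset.sum_sub_distrib, ← Finset.sum_add_distrib]
      refine Finset.sum_congr rfl fun i _ => ?_
      rw [← Finset.sum_sub_distrib, ← Finset.sum_sub_distrib, ← Finset.sum_add_distrib]
      refine Finset.sum_congr rfl fun j _ => ?_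
      rw [hrlow i j]; ring
    unfold r00
    rw [key, ← sum_mul_sum' (fun i => pd σ i x * y i) (fun j => b x j * y j),
        ← sum_mul_sum' (fun i => b x i * y i) (fun j => pd σ j x * y j), ← hS]
    unfold sig0 beta
    ring
  -- s0 under conformal change
  have hsup : ∀ i j, sup (abar σ a) abarInv (bbar σ b) x i j
      = (Real.exp (σ x))⁻¹ * (sup a ainv b x i j
          + (bup ainv b x i * pd σ j x - b x j * sigup ainv σ x i)/2) := by
    intro i j
    have step : ∀ r, abarInv x i r * slow (abar σ a) abarInv (bbar σ b) x r j
        = (Real.exp (σ x))⁻¹ * (ainv x i r * slow a ainv b x r j)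
          + ((Real.exp (σ x))⁻¹ * pd σ j x / 2) * (ainv x i r * b x r)
          - ((Real.exp (σ x))⁻¹ * b x j / 2) * (ainv x i r * pd σ r x) := by
      intro r
      rw [habarInv' i r, hslow r j, hE2]
      field_simp
      ring
    unfold sup
    rw [Finset.sum_congr rfl fun r _ => step r, Finset.sum_sub_distrib,
        Finset.sum_add_distrib]
    have g1 : (∑ r, (Real.exp (σ x))⁻¹ * (ainv x i r * slow a ainv b x r j))
        = (Real.exp (σ x))⁻¹ * ∑ r, ainv x i r * slow a ainv b x r j := by
      rw [← Finset.mul_sum]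
    have g2 : (∑ r, ((Real.exp (σ x))⁻¹ * pd σ j x / 2) * (ainv x i r * b x r))
        = ((Real.exp (σ x))⁻¹ * pd σ j x / 2) * bup ainv b x i := by
      unfold bup; rw [← Finset.mul_sum]
    have g3 : (∑ r, ((Real.exp (σ x))⁻¹ * b x j / 2) * (ainv x i r * pd σ r x))
        = ((Real.exp (σ x))⁻¹ * b x j / 2) * sigup ainv σ x i := by
      unfold sigup; rw [← Finset.mul_sum]
    rw [g1, g2, g3]
    ring
  have hsvec : ∀ j, svec (abar σ a) abarInv (bbar σ b) x j
      = svec a ainv b x j + (bsq ainv b x * pd σ j x - rho ainv b σ x * b x j)/2 := by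
    intro j
    have step : ∀ r, bbar σ b x r * sup (abar σ a) abarInv (bbar σ b) x r j
        = b x r * sup a ainv b x r j + (pd σ j x / 2) * (b x r * bup ainv b x r)
          - (b x j / 2) * (b x r * sigup ainv σ x r) := by
      intro r
      rw [hsup r j]
      simp only [bbar]
      field_simp
      ring
    unfold svec
    rw [Finset.sum_congr rfl fun r _ => step r, Finset.sum_sub_distrib,
        Finset.sum_add_distrib]
    have g2 : (∑ r, (pd σ j x / 2) * (b x r * bup ainv b x r))
        = (pd σ j x / 2) * bsq ainv b x := by rw [← Finset.mul_sum, hbb]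
    have g3 : (∑ r, (b x j / 2) * (b x r * sigup ainv σ x r))
        = (b x j / 2) * rho ainv b σ x := by rw [← Finset.mul_sum, hbsig]
    rw [g2, g3]
    ring
  have hs0 : s0 (abar σ a) abarInv (bbar σ b) x y
      = s0 a ainv b x y + (bsq ainv b x * sig0 σ x y - rho ainv b σ x * beta b x y)/2 := by
    have step : ∀ j, svec (abar σ a) abarInv (bbar σ b) x j * y j
        = svec a ainv b x j * y j + (bsq ainv b x / 2) * (pd σ j x * y j)
          - (rho ainv b σ x / 2) * (b x j * y j) := by
      intro j; rw [hsvec j]; ring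
    unfold s0
    rw [Finset.sum_congr rfl fun j _ => step j, Finset.sum_sub_distrib,
        Finset.sum_add_distrib]
    have g1 : (∑ j, (bsq ainv b x / 2) * (pd σ j x * y j))
        = (bsq ainv b x / 2) * sig0 σ x y := by unfold sig0; rw [← Finset.mul_sum]
    have g2 : (∑ j, (rho ainv b σ x / 2) * (b x j * y j))
        = (rho ainv b σ x / 2) * beta b x y := by unfold beta; rw [← Finset.mul_sum]
    rw [g1, g2]
    ring
  -- alpha, beta, bsq under conformal change
  have hbeta : beta (bbar σ b) x y = Real.exp (σ x) * beta b x y := by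
    unfold beta
    simp only [bbar]
    rw [Finset.mul_sum]
    exact Finset.sum_congr rfl fun i _ => by ring
  have halpha : alpha (abar σ a) x y = Real.exp (σ x) * alpha a x y := by
    unfold alpha
    have h1 : (∑ i, ∑ j, abar σ a x i j * y i * y j)
        = Real.exp (σ x) * (Real.exp (σ x) * ∑ i, ∑ j, a x i j * y i * y j) := by
      simp only [abar, Matrix.smul_apply, smul_eq_mul, Finset.mul_sum]
      refine Finset.sum_congr rfl fun i _ => Finset.sum_congr rfl fun j _ => ?_
      rw [hE2]; ring
    rw [h1, Real.sqrt_mul hc.le, Real.sqrt_mul hc.le, ← mul_assoc,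
      Real.mul_self_sqrt hc.le]
  have hbsq : bsq abarInv (bbar σ b) x = bsq ainv b x := by
    unfold bsq
    refine Finset.sum_congr rfl fun r _ => Finset.sum_congr rfl fun s _ => ?_
    simp only [bbar]
    rw [habarInv' r s, hE2]
    field_simp
  -- Omega under conformal change
  have hOmbar : Om L (bsq ainv b x) (Real.exp (σ x) * alpha a x y)
        (Real.exp (σ x) * beta b x y)
      = Real.exp (σ x) ^ 2 * Om L (bsq ainv b x) (alpha a x y) (beta b x y) := by
    have hlaa := Laa_hom L hL hLhom hc (alpha a x y) (beta b x y)
    have hlaa' : Laa L (Real.exp (σ x) * alpha a x y) (Real.exp (σ x) * beta b x y)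
        = Laa L (alpha a x y) (beta b x y) / Real.exp (σ x) := by
      rw [← hlaa]; field_simp
    unfold Om gam2
    rw [La_hom L hL hLhom hc, hlaa']
    field_simp
  -- final computation
  simp only [Cstar, Dstar]
  rw [halpha, hbeta, hbsq, hr00, hs0, hOmbar, La_hom L hL hLhom hc, Lb_hom L hL hLhom hc]
  field_simp
  ring

end CD
end
end

section
/- Under the conformal change ā_{ij} = e^{2σ}a_{ij}, b̄_i = e^{σ}b_i, one has B̄^{im}_m = B^{im}_m + K^{im}_m, where 2K^{im}_m = (n+1)(αL_β/L_α)(σ₀b^i − βσ^i) + α{((n+1)α²ΩL_{αα}b^i + βγ²Ay^i)/Ω²}(ρα² − σ₀β) − [α²{(n+1)α²ΩL_βL_{αα}b^i + By^i}/(L_αΩ²) − α³L_{αα}y^i/Ω](b²σ₀ − ρβ). -/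
noncomputable section

namespace CD

/-! ### Auxiliary lemmas for the conformal change computation -/

section AuxL

variable {L : ℝ → ℝ → ℝ}

lemma slice1_cd (hL : ContDiff ℝ (⊤ : ℕ∞) (fun p : ℝ × ℝ => L p.1 p.2)) (t : ℝ) :
    ContDiff ℝ (↑(⊤ : ℕ∞)) (fun u => L u t) :=
  (hL.comp (contDiff_id.prodMk contDiff_const)).of_le (by simp)

lemma slice2_cd (hL : ContDiff ℝ (⊤ : ℕ∞) (fun p : ℝ × ℝ => L p.1 p.2)) (s : ℝ) :
    ContDiff ℝ (↑(⊤ : ℕ∞)) (fun u => L s u) :=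
  (hL.comp (contDiff_const.prodMk contDiff_id)).of_le (by simp)

lemma La_cd (hL : ContDiff ℝ (⊤ : ℕ∞) (fun p : ℝ × ℝ => L p.1 p.2)) (t : ℝ) :
    ContDiff ℝ (↑(⊤ : ℕ∞)) (fun u => La L u t) :=
  (contDiff_infty_iff_deriv.mp (slice1_cd hL t)).2

lemma Laa_cd (hL : ContDiff ℝ (⊤ : ℕ∞) (fun p : ℝ × ℝ => L p.1 p.2)) (t : ℝ) :
    ContDiff ℝ (↑(⊤ : ℕ∞)) (fun u => Laa L u t) :=
  (contDiff_infty_iff_deriv.mp (La_cd hL t)).2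

lemma deriv_scale {f g : ℝ → ℝ} (hf : Differentiable ℝ f) (c : ℝ)
    (h : ∀ u, f (c * u) = g u) (s : ℝ) : c * deriv f (c * s) = deriv g s := by
  have h1 : (fun u => f (c * u)) = g := funext h
  have h2 : deriv (fun u => f (c * u)) s = deriv f (c * s) * c := by
    rw [show (fun u => f (c * u)) = f ∘ (fun u => c * u) from rfl,
      deriv_comp s (hf _) (by fun_prop : DifferentiableAt ℝ (fun u : ℝ => c * u) s)]
    have hcu : deriv (fun y : ℝ => c * y) s = c := by
      rw [deriv_const_mul_field]; simp
    rw [hcu]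
  rw [← h1, h2]; ring

variable (hL : ContDiff ℝ (⊤ : ℕ∞) (fun p : ℝ × ℝ => L p.1 p.2))
  (hLhom : ∀ c > 0, ∀ s t : ℝ, L (c * s) (c * t) = c * L s t)

include hL hLhom in
lemma La_scale {c : ℝ} (hc : 0 < c) (s t : ℝ) : La L (c * s) (c * t) = La L s t := by
  have hd := (slice1_cd hL (c * t)).differentiable (by simp)
  have h0 := deriv_scale hd c (fun u => hLhom c hc u t) s
  rw [deriv_const_mul_field c] at h0
  have h1 : c * La L (c * s) (c * t) = c * La L s t := h0
  exact mul_left_cancel₀ (ne_of_gt hc) h1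

include hL hLhom in
lemma Lb_scale {c : ℝ} (hc : 0 < c) (s t : ℝ) : Lb L (c * s) (c * t) = Lb L s t := by
  have hd := (slice2_cd hL (c * s)).differentiable (by simp)
  have h0 := deriv_scale hd c (fun u => hLhom c hc s u) t
  rw [deriv_const_mul_field c] at h0
  have h1 : c * Lb L (c * s) (c * t) = c * Lb L s t := h0
  exact mul_left_cancel₀ (ne_of_gt hc) h1

include hL hLhom in
lemma Laa_scale {c : ℝ} (hc : 0 < c) (s t : ℝ) : Laa L (c * s) (c * t) = Laa L s t / c := by
  have hd := (La_cd hL (c * t)).differentiable (by simp)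
  have h0 := deriv_scale hd c (fun u => La_scale hL hLhom hc u t) s
  have h1 : c * Laa L (c * s) (c * t) = Laa L s t := h0
  rw [eq_div_iff (ne_of_gt hc)]
  linear_combination h1

include hL hLhom in
lemma Laaa_scale {c : ℝ} (hc : 0 < c) (s t : ℝ) :
    Laaa L (c * s) (c * t) = Laaa L s t / c ^ 2 := by
  have hd := (Laa_cd hL (c * t)).differentiable (by simp)
  have h0 := deriv_scale hd c (fun u => Laa_scale hL hLhom hc u t) s
  have h2 : deriv (fun u => Laa L u t / c) s = Laaa L s t / c := by
    simp only [div_eq_inv_mul]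
    rw [deriv_const_mul_field]
    rfl
  rw [h2] at h0
  have h1 : c * Laaa L (c * s) (c * t) = Laaa L s t / c := h0
  rw [eq_div_iff (pow_ne_zero 2 (ne_of_gt hc))]
  have hc' := ne_of_gt hc
  field_simp at h1
  linear_combination h1

lemma gam2_scale (b2 c s t : ℝ) : gam2 b2 (c * s) (c * t) = c ^ 2 * gam2 b2 s t := by
  unfold gam2; ring

include hL hLhom in
lemma Om_scale {c : ℝ} (hc : 0 < c) (b2 s t : ℝ) :
    Om L b2 (c * s) (c * t) = c ^ 2 * Om L b2 s t := by
  unfold Om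
  rw [La_scale hL hLhom hc, Laa_scale hL hLhom hc, gam2_scale]
  field_simp

include hL hLhom in
lemma Afun_scale {c : ℝ} (hc : 0 < c) (s t : ℝ) :
    Afun L (c * s) (c * t) = Afun L s t / c := by
  unfold Afun
  rw [La_scale hL hLhom hc, Laa_scale hL hLhom hc, Laaa_scale hL hLhom hc]
  field_simp

include hL hLhom in
lemma Bcal_scale {c : ℝ} (hc : 0 < c) (b2 s t : ℝ) :
    Bcal L b2 (c * s) (c * t) = c ^ 2 * Bcal L b2 s t := by
  unfold Bcal
  rw [La_scale hL hLhom hc, Lb_scale hL hLhom hc, Laa_scale hL hLhom hc,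
    Laaa_scale hL hLhom hc, gam2_scale, Om_scale hL hLhom hc, hLhom c hc]
  field_simp

/-- product rule for `pd` with an exponential factor -/
lemma pd_exp_mul {n : ℕ} {σ f : (Fin n → ℝ) → ℝ} {x : Fin n → ℝ}
    (hσ : DifferentiableAt ℝ σ x) (hf : DifferentiableAt ℝ f x) (k : Fin n) :
    pd (fun z => Real.exp (σ z) * f z) k x
      = Real.exp (σ x) * (pd σ k x * f x + pd f k x) := by
  unfold pd
  have h2 : DifferentiableAt ℝ (fun z => Real.exp (σ z)) x := hσ.exp
  rw [fderiv_fun_mul h2 hf, fderiv_exp hσ]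
  simp only [ContinuousLinearMap.add_apply, ContinuousLinearMap.smul_apply, smul_eq_mul]
  ring

lemma pd_const_mul {n : ℕ} {σ : (Fin n → ℝ) → ℝ} {x : Fin n → ℝ} (c : ℝ)
    (hσ : DifferentiableAt ℝ σ x) (k : Fin n) :
    pd (fun z => c * σ z) k x = c * pd σ k x := by
  unfold pd
  rw [fderiv_const_mul hσ]
  simp

end AuxL

set_option maxHeartbeats 4000000 in
/-- conformal change of B^{im}_m: B̄^{im}_m = B^{im}_m + K^{im}_m. -/
theorem conformal_change_Bimm
    {n : ℕ} (hn : 2 ≤ n) (M : Set (Fin n → ℝ)) (hM : IsOpen M)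
    (a ainv abarInv : (Fin n → ℝ) → Matrix (Fin n) (Fin n) ℝ)
    (b : (Fin n → ℝ) → Fin n → ℝ) (σ : (Fin n → ℝ) → ℝ)
    (ha : ∀ i j, ContDiffOn ℝ (⊤ : ℕ∞) (fun z => a z i j) M)
    (hb : ∀ i, ContDiffOn ℝ (⊤ : ℕ∞) (fun z => b z i) M)
    (hσ : ContDiffOn ℝ (⊤ : ℕ∞) σ M)
    (hsym : ∀ x ∈ M, (a x).IsSymm)
    (hpos : ∀ x ∈ M, (a x).PosDef)
    (hInv : ∀ x ∈ M, a x * ainv x = 1)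
    (hInvBar : ∀ x ∈ M, abar σ a x * abarInv x = 1)
    (L : ℝ → ℝ → ℝ) (hL : ContDiff ℝ (⊤ : ℕ∞) (fun p : ℝ × ℝ => L p.1 p.2))
    (hLhom : ∀ c > 0, ∀ s t : ℝ, L (c * s) (c * t) = c * L s t)
    :
    ∀ x ∈ M, ∀ y : Fin n → ℝ, y ≠ 0 → beta b x y ≠ 0 →
      Om L (bsq ainv b x) (alpha a x y) (beta b x y) ≠ 0 →
      ∀ i, BimmC L (abar σ a) abarInv (bbar σ b) x y i
        = BimmC L a ainv b x y i + Kimm L a ainv b σ x y i := by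
  intro x hx y hy hbet hOmne i
  have hc : (0:ℝ) < Real.exp (σ x) := Real.exp_pos _
  set c : ℝ := Real.exp (σ x) with hcdef
  have hc0 : c ≠ 0 := ne_of_gt hc
  have hc2 : Real.exp (2 * σ x) = c ^ 2 := by
    rw [two_mul, Real.exp_add]; ring
  -- differentiability at x
  have hmem : M ∈ nhds x := hM.mem_nhds hx
  have hax : ∀ i j, DifferentiableAt ℝ (fun z => a z i j) x := fun i j =>
    ((ha i j).differentiableOn (by simp)).differentiableAt hmem
  have hbx : ∀ i, DifferentiableAt ℝ (fun z => b z i) x := fun i =>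
    ((hb i).differentiableOn (by simp)).differentiableAt hmem
  have hsx : DifferentiableAt ℝ σ x :=
    (hσ.differentiableOn (by simp)).differentiableAt hmem
  -- matrix algebra facts
  have hinv := hInv x hx
  have hinv' : ainv x * a x = 1 := mul_eq_one_comm.mp hinv
  have hdelta : ∀ i k, (∑ r, ainv x i r * a x r k) = if i = k then (1:ℝ) else 0 := by
    intro i k
    have h1 : (ainv x * a x) i k = (1 : Matrix (Fin n) (Fin n) ℝ) i k := by rw [hinv']
    rw [Matrix.mul_apply] at h1
    rw [h1, Matrix.one_apply]
  have hsyma : ∀ i j, a x i j = a x j i := by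
    intro i j
    nth_rewrite 1 [← hsym x hx]
    exact Matrix.transpose_apply (a x) i j
  have hTinv : (ainv x).transpose * a x = 1 := by
    have h := congrArg Matrix.transpose hinv
    rw [Matrix.transpose_mul, Matrix.transpose_one] at h
    rwa [hsym x hx] at h
  have hsyminv : ∀ i j, ainv x i j = ainv x j i := by
    have h1 : (ainv x).transpose = ainv x := by
      calc (ainv x).transpose = (ainv x).transpose * (a x * ainv x) := by rw [hinv, mul_one]
        _ = ((ainv x).transpose * a x) * ainv x := by rw [mul_assoc]
        _ = ainv x := by rw [hTinv, one_mul]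
    intro i j
    nth_rewrite 1 [← h1]
    exact Matrix.transpose_apply (ainv x) i j
  -- the barred inverse matrix
  have hbarinv' : ((c ^ 2)⁻¹ • ainv x) * abar σ a x = 1 := by
    have habarfact : abar σ a x = c ^ 2 • a x := by
      unfold abar; rw [hc2]
    rw [habarfact, Matrix.smul_mul, Matrix.mul_smul, hinv', smul_smul,
      inv_mul_cancel₀ (by positivity : (c:ℝ)^2 ≠ 0), one_smul]
  have habarInv : ∀ i j, abarInv x i j = (c ^ 2)⁻¹ * ainv x i j := by
    have h1 : abarInv x = (c ^ 2)⁻¹ • ainv x := by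
      have h2 := hInvBar x hx
      calc abarInv x = 1 * abarInv x := (one_mul _).symm
        _ = (((c ^ 2)⁻¹ • ainv x) * abar σ a x) * abarInv x := by rw [hbarinv']
        _ = ((c ^ 2)⁻¹ • ainv x) * (abar σ a x * abarInv x) := by rw [mul_assoc]
        _ = (c ^ 2)⁻¹ • ainv x := by rw [h2, mul_one]
    intro i j
    rw [h1]
    simp [Matrix.smul_apply]
  -- partial derivatives of the barred data
  have hpda : ∀ i j k, pd (fun z => abar σ a z i j) k x
      = c ^ 2 * (2 * pd σ k x * a x i j + pd (fun z => a z i j) k x) := by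
    intro i j k
    have h1 : (fun z => abar σ a z i j) = (fun z => Real.exp (2 * σ z) * a z i j) := by
      funext z
      simp [abar, Matrix.smul_apply, smul_eq_mul]
    rw [h1, pd_exp_mul (hsx.const_mul 2) (hax i j) k, pd_const_mul 2 hsx k, hc2]
  have hpdb : ∀ i k, pd (fun z => bbar σ b z i) k x
      = c * (pd σ k x * b x i + pd (fun z => b z i) k x) := by
    intro i k
    have h1 : (fun z => bbar σ b z i) = (fun z => Real.exp (σ z) * b z i) := rfl
    rw [h1, pd_exp_mul hsx (hbx i) k]
  -- simple contraction identities
  have hrho' : (∑ r, b x r * sigup ainv σ x r) = rho ainv b σ x := by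
    unfold sigup rho bup
    simp only [Finset.mul_sum]
    rw [Finset.sum_comm]
    exact Finset.sum_congr rfl fun r _ => Finset.sum_congr rfl fun s _ => by
      rw [hsyminv s r]; ring
  have hrho2 : (∑ r, bup ainv b x r * pd σ r x) = rho ainv b σ x := by
    unfold rho
    exact Finset.sum_congr rfl fun r _ => mul_comm _ _
  have hbb : (∑ r, b x r * bup ainv b x r) = bsq ainv b x := by
    unfold bup bsq
    simp only [Finset.mul_sum]
    exact Finset.sum_congr rfl fun r _ => Finset.sum_congr rfl fun s _ => by ring
  have hbb' : (∑ r, bup ainv b x r * b x r) = bsq ainv b x := by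
    rw [← hbb]
    exact Finset.sum_congr rfl fun r _ => mul_comm _ _
  have hba : ∀ i, (∑ r, bup ainv b x r * a x r i) = b x i := by
    intro i
    unfold bup
    simp only [Finset.sum_mul]
    rw [Finset.sum_comm]
    have h1 : ∀ s, (∑ r, ainv x r s * b x s * a x r i)
        = b x s * (∑ r, ainv x s r * a x r i) := by
      intro s
      rw [Finset.mul_sum]
      exact Finset.sum_congr rfl fun r _ => by rw [hsyminv s r]; ring
    rw [Finset.sum_congr rfl fun s _ => h1 s]
    simp only [hdelta]
    simp
  -- Christoffel symbols under conformal change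
  have hchr : ∀ i j k, chr (abar σ a) abarInv x i j k
      = chr a ainv x i j k + (if i = k then (1:ℝ) else 0) * pd σ j x
        + (if i = j then (1:ℝ) else 0) * pd σ k x - a x j k * sigup ainv σ x i := by
    intro i j k
    unfold chr sigup
    rw [show (if i = k then (1:ℝ) else 0) = ∑ r, ainv x i r * a x r k from (hdelta i k).symm,
      show (if i = j then (1:ℝ) else 0) = ∑ r, ainv x i r * a x r j from (hdelta i j).symm]
    simp only [habarInv, hpda]
    simp only [mul_add, mul_sub, add_mul, sub_mul, sub_div, add_div, Finset.mul_sum,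
      Finset.sum_mul, Finset.sum_div]
    simp only [← Finset.sum_add_distrib, ← Finset.sum_sub_distrib]
    refine Finset.sum_congr rfl fun r _ => ?_
    field_simp
    ring
  -- covariant derivative of b under conformal change
  have hcovd : ∀ i j, covd (abar σ a) abarInv (bbar σ b) x i j
      = c * (covd a ainv b x i j - b x j * pd σ i x + a x i j * rho ainv b σ x) := by
    intro i j
    unfold covd
    rw [hpdb i j]
    have key : ∀ r, bbar σ b x r * chr (abar σ a) abarInv x r i j
        = c * (b x r * chr a ainv x r i j)
          + (if r = j then c * (b x r * pd σ i x) else 0)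
          + (if r = i then c * (b x r * pd σ j x) else 0)
          - (b x r * sigup ainv σ x r) * (c * a x i j) := by
      intro r
      rw [show bbar σ b x r = c * b x r from rfl, hchr r i j]
      split_ifs <;> ring
    rw [Finset.sum_congr rfl fun r _ => key r]
    rw [Finset.sum_sub_distrib, Finset.sum_add_distrib, Finset.sum_add_distrib,
      ← Finset.mul_sum, ← Finset.sum_mul]
    simp only [Finset.sum_ite_eq', Finset.mem_univ, if_true]
    rw [hrho']
    ring
  -- r_{ij} and s_{ij} under conformal change
  have hrlow : ∀ i j, rlow (abar σ a) abarInv (bbar σ b) x i j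
      = c * (rlow a ainv b x i j - (b x i * pd σ j x + b x j * pd σ i x) / 2
          + a x i j * rho ainv b σ x) := by
    intro i j
    unfold rlow
    rw [hcovd i j, hcovd j i, hsyma j i]
    ring
  have hslow : ∀ i j, slow (abar σ a) abarInv (bbar σ b) x i j
      = c * (slow a ainv b x i j + (b x i * pd σ j x - b x j * pd σ i x) / 2) := by
    intro i j
    unfold slow
    rw [hcovd i j, hcovd j i, hsyma j i]
    ring
  -- b^i and b² under conformal change
  have hbup : ∀ i, bup abarInv (bbar σ b) x i = c⁻¹ * bup ainv b x i := by
    intro i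
    unfold bup
    rw [Finset.mul_sum]
    refine Finset.sum_congr rfl fun r _ => ?_
    rw [habarInv i r, show bbar σ b x r = c * b x r from rfl]
    field_simp
  have hbsq : bsq abarInv (bbar σ b) x = bsq ainv b x := by
    unfold bsq
    refine Finset.sum_congr rfl fun r _ => Finset.sum_congr rfl fun s _ => ?_
    rw [habarInv r s, show bbar σ b x r = c * b x r from rfl,
      show bbar σ b x s = c * b x s from rfl]
    field_simp
  -- s^i_j and its contractions
  have hsup : ∀ i j, sup (abar σ a) abarInv (bbar σ b) x i j
      = c⁻¹ * (sup a ainv b x i j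
          + (bup ainv b x i * pd σ j x - b x j * sigup ainv σ x i) / 2) := by
    intro i j
    unfold sup bup sigup
    simp only [habarInv, hslow]
    simp only [mul_add, mul_sub, add_mul, sub_mul, sub_div, add_div, Finset.mul_sum, Finset.sum_mul, Finset.sum_div]
    simp only [← Finset.sum_add_distrib, ← Finset.sum_sub_distrib]
    refine Finset.sum_congr rfl fun r _ => ?_
    field_simp
  have hsup0 : ∀ i, sup0 (abar σ a) abarInv (bbar σ b) x y i
      = c⁻¹ * (sup0 a ainv b x y i
          + (bup ainv b x i * sig0 σ x y - beta b x y * sigup ainv σ x i) / 2) := by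
    intro i
    unfold sup0 sig0 beta
    simp only [hsup]
    simp only [mul_add, mul_sub, add_mul, sub_mul, sub_div, add_div, Finset.mul_sum, Finset.sum_mul, Finset.sum_div]
    simp only [← Finset.sum_add_distrib, ← Finset.sum_sub_distrib]
    refine Finset.sum_congr rfl fun j _ => ?_
    field_simp
    try ring
    try exact Or.inl trivial
  have hsvec : ∀ j, svec (abar σ a) abarInv (bbar σ b) x j
      = svec a ainv b x j + (bsq ainv b x * pd σ j x - b x j * rho ainv b σ x) / 2 := by
    intro j
    unfold svec
    rw [← hbb, ← hrho']
    simp only [hsup, show ∀ r, bbar σ b x r = c * b x r from fun r => rfl]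
    simp only [mul_add, mul_sub, add_mul, sub_mul, sub_div, add_div, Finset.mul_sum, Finset.sum_mul, Finset.sum_div]
    simp only [← Finset.sum_add_distrib, ← Finset.sum_sub_distrib]
    refine Finset.sum_congr rfl fun r _ => ?_
    field_simp
  have hs0 : s0 (abar σ a) abarInv (bbar σ b) x y
      = s0 a ainv b x y + (bsq ainv b x * sig0 σ x y - rho ainv b σ x * beta b x y) / 2 := by
    unfold s0 sig0 beta
    simp only [hsvec]
    simp only [mul_add, mul_sub, add_mul, sub_mul, sub_div, add_div, Finset.mul_sum,
      Finset.sum_mul, Finset.sum_div]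
    simp only [← Finset.sum_add_distrib, ← Finset.sum_sub_distrib]
    exact Finset.sum_congr rfl fun j _ => by ring
  -- r_i and its contraction
  have hrvec : ∀ i, rvec (abar σ a) abarInv (bbar σ b) x i
      = rvec a ainv b x i
        + (rho ainv b σ x * b x i - bsq ainv b x * pd σ i x) / 2 := by
    intro i
    have key : ∀ r, bup abarInv (bbar σ b) x r * rlow (abar σ a) abarInv (bbar σ b) x r i
        = bup ainv b x r * rlow a ainv b x r i
          + (bup ainv b x r * a x r i) * rho ainv b σ x
          - (bup ainv b x r * b x r) * (pd σ i x / 2)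
          - (bup ainv b x r * pd σ r x) * (b x i / 2) := by
      intro r
      rw [hbup r, hrlow r i]
      field_simp
      ring
    calc rvec (abar σ a) abarInv (bbar σ b) x i
        = ∑ r, (bup ainv b x r * rlow a ainv b x r i
            + (bup ainv b x r * a x r i) * rho ainv b σ x
            - (bup ainv b x r * b x r) * (pd σ i x / 2)
            - (bup ainv b x r * pd σ r x) * (b x i / 2)) :=
          Finset.sum_congr rfl fun r _ => key r
      _ = (∑ r, bup ainv b x r * rlow a ainv b x r i)
            + (∑ r, bup ainv b x r * a x r i) * rho ainv b σ x
            - (∑ r, bup ainv b x r * b x r) * (pd σ i x / 2)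
            - (∑ r, bup ainv b x r * pd σ r x) * (b x i / 2) := by
          rw [Finset.sum_sub_distrib, Finset.sum_sub_distrib, Finset.sum_add_distrib,
            Finset.sum_mul, Finset.sum_mul, Finset.sum_mul]
      _ = rvec a ainv b x i
            + (rho ainv b σ x * b x i - bsq ainv b x * pd σ i x) / 2 := by
          rw [hbb', hrho2, hba i,
            show (∑ r, bup ainv b x r * rlow a ainv b x r i) = rvec a ainv b x i from rfl]
          ring
  have hr0 : r0 (abar σ a) abarInv (bbar σ b) x y
      = r0 a ainv b x y
        + (rho ainv b σ x * beta b x y - bsq ainv b x * sig0 σ x y) / 2 := by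
    unfold r0 beta sig0
    simp only [hrvec]
    simp only [mul_add, mul_sub, add_mul, sub_mul, sub_div, add_div, Finset.mul_sum,
      Finset.sum_mul, Finset.sum_div]
    simp only [← Finset.sum_add_distrib, ← Finset.sum_sub_distrib]
    exact Finset.sum_congr rfl fun i _ => by ring
  -- the square of alpha
  have hSapos : (0:ℝ) ≤ ∑ i, ∑ j, a x i j * y i * y j := by
    have h := (hpos x hx).posSemidef.dotProduct_mulVec_nonneg y
    simp only [dotProduct, Matrix.mulVec, star_trivial, Pi.star_apply] at h
    calc (0:ℝ) ≤ ∑ i, y i * ∑ j, a x i j * y j := h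
      _ = ∑ i, ∑ j, a x i j * y i * y j := by
        refine Finset.sum_congr rfl fun i _ => ?_
        rw [Finset.mul_sum]
        exact Finset.sum_congr rfl fun j _ => by ring
  have hSa : (∑ i, ∑ j, a x i j * y i * y j) = (alpha a x y) ^ 2 := by
    unfold alpha
    rw [Real.sq_sqrt hSapos]
  have halpha : alpha (abar σ a) x y = c * alpha a x y := by
    unfold alpha
    have h1 : (∑ i, ∑ j, abar σ a x i j * y i * y j)
        = c ^ 2 * ∑ i, ∑ j, a x i j * y i * y j := by
      rw [Finset.mul_sum]
      refine Finset.sum_congr rfl fun i _ => ?_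
      rw [Finset.mul_sum]
      refine Finset.sum_congr rfl fun j _ => ?_
      rw [show abar σ a x i j = Real.exp (2 * σ x) * a x i j from rfl, hc2]
      ring
    rw [h1, Real.sqrt_mul (by positivity), Real.sqrt_sq hc.le]
  have hbeta : beta (bbar σ b) x y = c * beta b x y := by
    unfold beta
    rw [Finset.mul_sum]
    refine Finset.sum_congr rfl fun j _ => ?_
    rw [show bbar σ b x j = c * b x j from rfl]
    ring
  -- r_{00} under conformal change
  have hr00' : r00 (abar σ a) abarInv (bbar σ b) x y
      = c * r00 a ainv b x y - (c / 2) * (sig0 σ x y * beta b x y)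
        - (c / 2) * (beta b x y * sig0 σ x y)
        + c * (rho ainv b σ x * (∑ i, ∑ j, a x i j * y i * y j)) := by
    unfold r00 sig0 beta
    simp only [hrlow]
    simp only [mul_add, mul_sub, add_mul, sub_mul, sub_div, add_div, Finset.mul_sum,
      Finset.sum_mul, Finset.sum_div]
    simp only [← Finset.sum_add_distrib, ← Finset.sum_sub_distrib]
    exact Finset.sum_congr rfl fun i _ => Finset.sum_congr rfl fun j _ => by ring
  have hr00 : r00 (abar σ a) abarInv (bbar σ b) x y
      = c * (r00 a ainv b x y - sig0 σ x y * beta b x y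
          + rho ainv b σ x * (alpha a x y) ^ 2) := by
    rw [hr00', hSa]
    ring
  -- final assembly
  simp only [BimmC, Kimm]
  rw [halpha, hbeta, hbsq, hsup0 i, hr00, hs0, hr0, hbup i,
    Om_scale hL hLhom hc, Afun_scale hL hLhom hc, Bcal_scale hL hLhom hc,
    La_scale hL hLhom hc, Lb_scale hL hLhom hc, Laa_scale hL hLhom hc, gam2_scale]
  by_cases hLa0 : La L (alpha a x y) (beta b x y) = 0
  · simp only [hLa0, div_zero, zero_mul, mul_zero, zero_div]
    field_simp
    ring
  · field_simp
    ring

end CD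
end
end
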